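/- Relation between consistency and equal-length consistency, part 1: if ρ* is a {(δ,ε)}-observation, t ≥ τ(ρ*), ρ ∈ GT^el_{δ,ε}(ρ*, t), and ρ' is a finite timed word with τ(ρ') ≤ t − max(τ(ρ), t − (δ+ε)), then ρ ·_{max(τ(ρ), t−(δ+ε))} ρ' ∈ GT_{δ,ε}(ρ*, t). -/

import Mathlib

open scoped Classical

universe u v w

/-- A finite timed word: nonnegative, non-decreasing timestamps. -/
def IsFTW {A : Type u} (ρ : List (A × ℝ)) : Prop :=
  (∀ p ∈ ρ, 0 ≤ p.2) ∧ ρ.Chain' (fun p q => p.2 ≤ q.2)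

/-- Duration of a finite timed word: its last timestamp (0 for the empty word). -/
def dur {A : Type u} (ρ : List (A × ℝ)) : ℝ := ((ρ.getLast?).map Prod.snd).getD 0

/-- An infinite timed word: nonnegative, non-decreasing, divergent timestamps. -/
def IsITW {A : Type u} (μ : ℕ → A × ℝ) : Prop :=
  (∀ i, 0 ≤ (μ i).2) ∧ (∀ i, (μ i).2 ≤ (μ (i + 1)).2) ∧
    Filter.Tendsto (fun i => (μ i).2) Filter.atTop Filter.atTop

/-- Shift every timestamp of an infinite timed word by `t`. -/
def shiftI {A : Type u} (μ : ℕ → A × ℝ) (t : ℝ) : ℕ → A × ℝ :=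
  fun i => ((μ i).1, (μ i).2 + t)

/-- Shift every timestamp of a finite timed word by `t`. -/
def shiftF {A : Type u} (ρ : List (A × ℝ)) (t : ℝ) : List (A × ℝ) :=
  ρ.map (fun p => (p.1, p.2 + t))

/-- Timed concatenation of two finite timed words at time `t`. -/
def catF {A : Type u} (ρ : List (A × ℝ)) (t : ℝ) (ρ' : List (A × ℝ)) : List (A × ℝ) :=
  ρ ++ shiftF ρ' t

/-- Timed concatenation `ρ ·_t μ` of a finite and an infinite timed word. -/
def cat {A : Type u} (ρ : List (A × ℝ)) (t : ℝ) (μ : ℕ → A × ℝ) : ℕ → A × ℝ :=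
  fun i => if h : i < ρ.length then ρ.get ⟨i, h⟩
    else ((μ (i - ρ.length)).1, (μ (i - ρ.length)).2 + t)

/-- `ρ` is consistent with observation `ρs` at time `t` under latency `δ` and jitter `ε`. -/
def Consistent {A : Type u} (δ ε : ℝ) (ρs ρ : List (A × ℝ)) (t : ℝ) : Prop :=
  IsFTW ρ ∧ dur ρ ≤ t ∧ dur ρs ≤ t ∧ ρs.length ≤ ρ.length ∧
  (∀ i, i < ρs.length → ∀ p q, ρ[i]? = some p → ρs[i]? = some q →
      p.1 = q.1 ∧ δ ≤ q.2 - p.2 ∧ q.2 - p.2 ≤ δ + ε) ∧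
  (ρs.length < ρ.length → ∀ p, ρ[ρs.length]? = some p → t - (δ + ε) ≤ p.2)

/-- Ground-truths consistent with `ρs` at `t` under latency `δ` and jitter `ε`. -/
def GTd {A : Type u} (δ ε : ℝ) (ρs : List (A × ℝ)) (t : ℝ) : Set (List (A × ℝ)) :=
  {ρ | Consistent δ ε ρs ρ t}

/-- Ground-truths consistent with `ρs` at `t` under some delay in `D`. -/
def GT {A : Type u} (D : Set (ℝ × ℝ)) (ρs : List (A × ℝ)) (t : ℝ) : Set (List (A × ℝ)) :=
  {ρ | ∃ d ∈ D, Consistent d.1 d.2 ρs ρ t}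

/-- A delay set: a nonempty set of (latency, jitter) pairs in ℝ≥0². -/
def DelaySet (D : Set (ℝ × ℝ)) : Prop :=
  D.Nonempty ∧ ∀ d ∈ D, 0 ≤ d.1 ∧ 0 ≤ d.2

/-- A `D`-observation: a finite timed word whose first timestamp is at least `δ`
for some `(δ,ε) ∈ D`. -/
def DObs {A : Type u} (D : Set (ℝ × ℝ)) (ρs : List (A × ℝ)) : Prop :=
  IsFTW ρs ∧ ∃ d ∈ D, ∀ p ∈ ρs.head?, d.1 ≤ p.2

/-- The three-valued verdict domain. -/
inductive Verdict | top | bot | unknown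
deriving DecidableEq

/-- Monitoring verdict under delay. -/
noncomputable def verdict {A : Type u} (D : Set (ℝ × ℝ)) (L : Set (ℕ → A × ℝ))
    (ρs : List (A × ℝ)) (t : ℝ) : Verdict :=
  if ∀ ρ ∈ GT D ρs t, ∀ μ, IsITW μ → cat ρ t μ ∈ L then .top
  else if ∀ ρ ∈ GT D ρs t, ∀ μ, IsITW μ → cat ρ t μ ∉ L then .bot
  else .unknown

/-- Equal-length consistent ground-truths. -/
def GTel {A : Type u} (δ ε : ℝ) (ρs : List (A × ℝ)) (t : ℝ) : Set (List (A × ℝ)) :=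
  {ρ | Consistent δ ε ρs ρ t ∧ ρ.length = ρs.length}

/-- Equal-length monitoring verdict under delay. -/
noncomputable def verdictEL {A : Type u} (D : Set (ℝ × ℝ)) (L : Set (ℕ → A × ℝ))
    (ρs : List (A × ℝ)) (t : ℝ) : Verdict :=
  if ∀ d ∈ D, ∀ ρ ∈ GTel d.1 d.2 ρs t, ∀ μ, IsITW μ →
      cat ρ (max (dur ρ) (t - (d.1 + d.2))) μ ∈ L then .top
  else if ∀ d ∈ D, ∀ ρ ∈ GTel d.1 d.2 ρs t, ∀ μ, IsITW μ →
      cat ρ (max (dur ρ) (t - (d.1 + d.2))) μ ∉ L then .bot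
  else .unknown

/-- The set of delays consistent with observation `ρs` at time `t` w.r.t. `L`. -/
def ConsDelays {A : Type u} (L : Set (ℕ → A × ℝ)) (ρs : List (A × ℝ)) (t : ℝ) :
    Set (ℝ × ℝ) :=
  {d | ∃ ρ ∈ GTd d.1 d.2 ρs t, ∃ μ, IsITW μ ∧ cat ρ t μ ∈ L}

/-- Extension relation on (finite timed word, time) pairs. -/
def ExtRel {A : Type u} (ρ : List (A × ℝ)) (t : ℝ) (ρ' : List (A × ℝ)) (t' : ℝ) : Prop :=
  ρ <+: ρ' ∧ ((ρ.length = ρ'.length ∧ t ≤ t') ∨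
    (ρ.length < ρ'.length ∧ ∀ p, ρ'[ρ.length]? = some p → t ≤ p.2))
/-- A timed Büchi automaton with locations `Q` and clocks `C`;
guards are modeled as sets of clock valuations. -/
structure TBA (A : Type u) (Q : Type v) (C : Type w) where
  init : Set Q
  trans : Set (Q × Q × A × Set C × Set (C → ℝ))
  acc : Set Q

/-- Reset the clocks in `lam` to zero. -/
noncomputable def resetVal {C : Type w} (lam : Set C) (v : C → ℝ) : C → ℝ :=
  fun x => if x ∈ lam then 0 else v x

/-- One transition step of a TBA, reading letter `a` after `d` time units. -/
def Step {A : Type u} {Q : Type v} {C : Type w} (M : TBA A Q C)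
    (s : Q × (C → ℝ)) (a : A) (d : ℝ) (s' : Q × (C → ℝ)) : Prop :=
  ∃ q' lam g, (s.1, q', a, lam, g) ∈ M.trans ∧ (fun x => s.2 x + d) ∈ g ∧
    s'.1 = q' ∧ s'.2 = resetVal lam (fun x => s.2 x + d)

/-- An infinite run of a TBA from state `s0` over the infinite timed word `μ`. -/
def InfRun {A : Type u} {Q : Type v} {C : Type w} (M : TBA A Q C)
    (s0 : Q × (C → ℝ)) (μ : ℕ → A × ℝ) (r : ℕ → Q × (C → ℝ)) : Prop :=
  r 0 = s0 ∧ ∀ i, Step M (r i) (μ i).1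
    ((μ i).2 - (if i = 0 then 0 else (μ (i - 1)).2)) (r (i + 1))

/-- The language of a TBA from a given state. -/
def LangFrom {A : Type u} {Q : Type v} {C : Type w} (M : TBA A Q C)
    (s : Q × (C → ℝ)) : Set (ℕ → A × ℝ) :=
  {μ | IsITW μ ∧ ∃ r, InfRun M s μ r ∧ {i | (r i).1 ∈ M.acc}.Infinite}

/-- The language of a TBA. -/
def Lang {A : Type u} {Q : Type v} {C : Type w} (M : TBA A Q C) : Set (ℕ → A × ℝ) :=
  {μ | ∃ q0 ∈ M.init, μ ∈ LangFrom M (q0, fun _ => 0)}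

/-- The states of a TBA with nonempty language. -/
def NonEmptyStates {A : Type u} {Q : Type v} {C : Type w} (M : TBA A Q C) :
    Set (Q × (C → ℝ)) :=
  {s | (LangFrom M s).Nonempty}

/-- The `i`-th timestamp of a finite timed word (default 0). -/
def tsd {A : Type u} (ρ : List (A × ℝ)) (i : ℕ) : ℝ := ((ρ[i]?).map Prod.snd).getD 0

/-- A finite run of a TBA from `s0` over `ρ`, ending in `send`. -/
def FinRun {A : Type u} {Q : Type v} {C : Type w} (M : TBA A Q C)
    (s0 : Q × (C → ℝ)) (ρ : List (A × ℝ)) (send : Q × (C → ℝ)) : Prop :=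
  ∃ r : ℕ → Q × (C → ℝ), r 0 = s0 ∧ r ρ.length = send ∧
    ∀ i, i < ρ.length → ∀ p, ρ[i]? = some p →
      Step M (r i) p.1 (p.2 - (if i = 0 then 0 else tsd ρ (i - 1))) (r (i + 1))

/-- The reach-set of `ρs` in `M` at `t` w.r.t. `D`: states reached on
equal-length consistent ground-truths, time-shifted by
`max 0 (t - (dur ρ + δ + ε))`. -/
def ReachSet {A : Type u} {Q : Type v} {C : Type w} (M : TBA A Q C)
    (D : Set (ℝ × ℝ)) (ρs : List (A × ℝ)) (t : ℝ) : Set (Q × (C → ℝ)) :=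
  {s | ∃ d ∈ D, ∃ ρ ∈ GTel d.1 d.2 ρs t, ∃ q0 ∈ M.init, ∃ v : C → ℝ,
      FinRun M (q0, fun _ => 0) ρ (s.1, v) ∧
      s.2 = fun x => v x + max 0 (t - (dur ρ + d.1 + d.2))}

/-- The automata-based monitor. -/
noncomputable def Monitor {A : Type u} {Q : Type v} {C : Type w} {Q' : Type*} {C' : Type*}
    (M : TBA A Q C) (Mbar : TBA A Q' C') (D : Set (ℝ × ℝ))
    (ρs : List (A × ℝ)) (t : ℝ) : Verdict :=
  if ReachSet Mbar D ρs t ∩ NonEmptyStates Mbar = ∅ then .top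
  else if ReachSet M D ρs t ∩ NonEmptyStates M = ∅ then .bot
  else .unknown

/-- Input projection of a timed word, w.r.t. the input indicator `inp`. -/
def inProj {A : Type u} (inp : A → Bool) (ρ : List (A × ℝ)) : List (A × ℝ) :=
  ρ.filter (fun p => inp p.1)

/-- Output projection of a timed word. -/
def outProj {A : Type u} (inp : A → Bool) (ρ : List (A × ℝ)) : List (A × ℝ) :=
  ρ.filter (fun p => !inp p.1)

/-- Testing consistency of ground-truth `ρ` with observation `ρs` at time `t`
under IO delay `d = (δ_I, ε_I, δ_O, ε_O)`. -/
def TCons {A : Type u} (inp : A → Bool) (d : ℝ × ℝ × ℝ × ℝ)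
    (ρs ρ : List (A × ℝ)) (t : ℝ) : Prop :=
  IsFTW ρ ∧ dur ρs ≤ t ∧ dur ρ ≤ max t (dur (inProj inp ρs) + (d.1 + d.2.1)) ∧
  (inProj inp ρ).length = (inProj inp ρs).length ∧
  (∀ (i : ℕ) (p q : A × ℝ), (inProj inp ρ)[i]? = some p → (inProj inp ρs)[i]? = some q →
      p.1 = q.1 ∧ d.1 ≤ p.2 - q.2 ∧ p.2 - q.2 ≤ d.1 + d.2.1) ∧
  (outProj inp ρs).length ≤ (outProj inp ρ).length ∧
  (∀ i, i < (outProj inp ρs).length → ∀ p q, (outProj inp ρ)[i]? = some p →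
      (outProj inp ρs)[i]? = some q →
      p.1 = q.1 ∧ d.2.2.1 ≤ q.2 - p.2 ∧ q.2 - p.2 ≤ d.2.2.1 + d.2.2.2) ∧
  ((outProj inp ρs).length < (outProj inp ρ).length →
    ∀ p, (outProj inp ρ)[(outProj inp ρs).length]? = some p →
      t - (d.2.2.1 + d.2.2.2) ≤ p.2)

/-- Testing-consistent ground-truths under some delay in `D`. -/
def GThat {A : Type u} (inp : A → Bool) (D : Set (ℝ × ℝ × ℝ × ℝ))
    (ρs : List (A × ℝ)) (t : ℝ) : Set (List (A × ℝ)) :=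
  {ρ | ∃ d ∈ D, TCons inp d ρs ρ t}

/-- An IO delay set: nonempty subset of ℝ≥0⁴. -/
def IODelaySet (D : Set (ℝ × ℝ × ℝ × ℝ)) : Prop :=
  D.Nonempty ∧ ∀ d ∈ D, 0 ≤ d.1 ∧ 0 ≤ d.2.1 ∧ 0 ≤ d.2.2.1 ∧ 0 ≤ d.2.2.2

/-- An IO `D`-observation: the first observed output has timestamp at least `δ_O`
for some delay tuple in `D`. -/
def DObsIO {A : Type u} (inp : A → Bool) (D : Set (ℝ × ℝ × ℝ × ℝ))
    (ρs : List (A × ℝ)) : Prop :=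
  IsFTW ρs ∧ ∃ d ∈ D, ∀ p ∈ (outProj inp ρs).head?, d.2.2.1 ≤ p.2

/-- Testing verdict under delay. -/
noncomputable def tverdict {A : Type u} (inp : A → Bool) (D : Set (ℝ × ℝ × ℝ × ℝ))
    (L : Set (ℕ → A × ℝ)) (ρs : List (A × ℝ)) (t : ℝ) : Verdict :=
  if ∀ ρ ∈ GThat inp D ρs t, ∀ μ, IsITW μ → cat ρ (max t (dur ρ)) μ ∈ L then .top
  else if ∀ ρ ∈ GThat inp D ρs t, ∀ μ, IsITW μ → cat ρ (max t (dur ρ)) μ ∉ L then .bot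
  else .unknown

/-- The set of IO delays consistent with observation `ρs` at `t` w.r.t. `L`. -/
def TConsDelays {A : Type u} (inp : A → Bool) (L : Set (ℕ → A × ℝ))
    (ρs : List (A × ℝ)) (t : ℝ) : Set (ℝ × ℝ × ℝ × ℝ) :=
  {d | ∃ ρ, TCons inp d ρs ρ t ∧ ∃ μ, IsITW μ ∧ cat ρ (max t (dur ρ)) μ ∈ L}


lemma dur_nonneg' {A : Type u} {ρ : List (A × ℝ)} (h : IsFTW ρ) : 0 ≤ dur ρ := by
  unfold dur
  cases hl : ρ.getLast? with
  | none => simp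
  | some p =>
    simp only [Option.map_some, Option.getD_some]
    exact h.1 p (List.mem_of_mem_getLast? (by simp [hl]))

/-- appending a recent suffix to an equal-length consistent
ground-truth yields a consistent ground-truth. -/
theorem stmt10 {A : Type u} (δ ε : ℝ) (hδ : 0 ≤ δ) (hε : 0 ≤ ε)
    (ρs : List (A × ℝ)) (hobs : DObs {(δ, ε)} ρs) (t : ℝ) (ht : dur ρs ≤ t)
    (ρ : List (A × ℝ)) (hρ : ρ ∈ GTel δ ε ρs t)
    (ρ' : List (A × ℝ)) (hρ' : IsFTW ρ')
    (hd : dur ρ' ≤ t - max (dur ρ) (t - (δ + ε))) :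
    catF ρ (max (dur ρ) (t - (δ + ε))) ρ' ∈ GTd δ ε ρs t := by
  obtain ⟨⟨hc, hdρ, hdρs, hlen, hmatch, _⟩, hleq⟩ := hρ
  set s := max (dur ρ) (t - (δ + ε)) with hs
  have hsρ : dur ρ ≤ s := le_max_left _ _
  have hst : t - (δ + ε) ≤ s := le_max_right _ _
  have hs0 : 0 ≤ s := le_trans (dur_nonneg' hc) hsρ
  have hlen' : ρs.length = ρ.length := hleq.symm
  refine ⟨⟨?_, ?_⟩, ?_, hdρs, ?_, ?_, ?_⟩
  · intro p hp
    rcases List.mem_append.1 hp with h | h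
    · exact hc.1 p h
    · rcases List.mem_map.1 h with ⟨q, hq, rfl⟩
      exact add_nonneg (hρ'.1 q hq) hs0
  · rw [catF, List.Chain', List.isChain_append]
    refine ⟨hc.2, ?_, ?_⟩
    · exact List.isChain_map_of_isChain _ (fun a b hab => by
        simpa using add_le_add_right hab s) hρ'.2
    · intro x hx y hy
      have hxd : x.2 = dur ρ := by
        rw [dur, hx]; simp
      rcases List.head?_eq_some_iff.1 (by
        rcases (shiftF ρ' s).head?.eq_none_or_eq_some with h | h
        · rw [hy] at h; exact absurd h (by simp)
        · exact hy) with ⟨l, hl⟩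
      have hy' : y ∈ shiftF ρ' s := by
        rw [hl]; exact List.mem_cons_self
      rcases List.mem_map.1 hy' with ⟨q, hq, rfl⟩
      have : 0 ≤ q.2 := hρ'.1 q hq
      simp only [hxd]
      calc dur ρ ≤ s := hsρ
        _ ≤ q.2 + s := by linarith
  · rcases eq_or_ne ρ' [] with rfl | hne
    · simpa [catF, shiftF] using hdρ
    · have hne' : shiftF ρ' s ≠ [] := by simp [shiftF, hne]
      rw [catF, dur, List.getLast?_append_of_ne_nil _ hne']
      have hlast : ρ'.getLast? = some (ρ'.getLast hne) := List.getLast?_eq_getLast hne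
      have : (shiftF ρ' s).getLast? = some ((ρ'.getLast hne).1, (ρ'.getLast hne).2 + s) := by
        rw [shiftF, List.getLast?_map, hlast]; rfl
      rw [this]
      simp only [Option.map_some, Option.getD_some]
      have hdur' : dur ρ' = (ρ'.getLast hne).2 := by rw [dur, hlast]; rfl
      have := hd
      rw [hdur'] at this
      linarith
  · rw [catF, List.length_append]
    omega
  · intro i hi p q hp hq
    have hiρ : i < ρ.length := by omega
    have : (catF ρ s ρ')[i]? = ρ[i]? := by
      rw [catF, List.getElem?_append, if_pos hiρ]
    rw [this] at hp
    exact hmatch i hi p q hp hq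
  · intro hlt p hp
    have : (catF ρ s ρ')[ρs.length]? = (shiftF ρ' s)[0]? := by
      rw [catF, List.getElem?_append_right (by omega), hlen']
      simp
    rw [this] at hp
    rcases hq : ρ'[0]? with _ | q
    · rw [shiftF, List.getElem?_map, hq] at hp; simp at hp
    · rw [shiftF, List.getElem?_map, hq] at hp
      simp only [Option.map_some, Option.some.injEq] at hp
      have : 0 ≤ q.2 := hρ'.1 q (List.mem_of_getElem? hq)
      rw [← hp]
      dsimp only
      linarith
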